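/- arXiv:2108.03882 — 3 statements merged into one kernel-verified Lean document; each statement's English description precedes it below -/
import Mathlib

section
/- Let K be the graph on k+2 vertices w_1, ..., w_{k+2} obtained from the complete graph by deleting the edges (w_1,w_2), (w_2,w_3), and (w_3,w_4), where k ≥ 2. Then every proper k-coloring of K assigns different colors to w_2 and w_3. -/
/-!
If `w₂` and `w₃` had the same colour `c`, look at the `k`-clique formed by all vertices other than
`w₂, w₃`. It must contain a vertex of colour `c`; but `w₁` is adjacent to `w₃` and every other
vertex of the clique is adjacent to `w₂`.
-/

/-- The gadget graph `K`: the complete graph on `k + 2` vertices `w_1, …, w_{k+2}`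
(here indexed `0, …, k+1`, with `w_i` corresponding to `i - 1`) minus the edges
`{w_1, w_2}`, `{w_2, w_3}` and `{w_3, w_4}`. -/
def Kgraph (k : ℕ) : SimpleGraph (Fin (k + 2)) :=
  (SimpleGraph.completeGraph (Fin (k + 2))).deleteEdges {s(0, 1), s(1, 2), s(2, 3)}

theorem SimpleGraph.Coloring.ne_of_isClique_of_forall_adj_or_adj {V α : Type*} [Fintype α]
    {G : SimpleGraph V} (C : G.Coloring α) {s : Finset V} (hs : G.IsClique (s : Set V))
    (hcard : Fintype.card α ≤ s.card) {u v : V} (hcover : ∀ x ∈ s, G.Adj u x ∨ G.Adj v x) :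
    C u ≠ C v := by
  intro huv
  obtain ⟨x, hx, hCx⟩ := C.surjOn_of_card_le_isClique hs hcard (Set.mem_univ (C u))
  rcases hcover x hx with hux | hvx
  · exact C.valid hux hCx.symm
  · exact C.valid hvx (hCx.trans huv).symm

namespace Kgraph

theorem adj_iff {k : ℕ} {x y : Fin (k + 2)} :
    (Kgraph k).Adj x y ↔
      x ≠ y ∧ s(x, y) ≠ s(0, 1) ∧ s(x, y) ≠ s(1, 2) ∧ s(x, y) ≠ s(2, 3) := by
  simp [Kgraph]

theorem card_compl_one_two {k : ℕ} (hk : 1 ≤ k) :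
    ({1, 2}ᶜ : Finset (Fin (k + 2))).card = k := by
  have h12 : (1 : Fin (k + 2)) ≠ 2 := by
    simp [Fin.ext_iff, Nat.mod_eq_of_lt (show 2 < k + 2 by omega)]
  rw [Finset.card_compl, Fintype.card_fin, Finset.card_pair h12]
  omega

/-- Every deleted edge meets `{w₂, w₃}`, so the remaining vertices are pairwise adjacent. -/
theorem isClique_compl_one_two (k : ℕ) :
    (Kgraph k).IsClique (({1, 2}ᶜ : Finset (Fin (k + 2))) : Set (Fin (k + 2))) := by
  intro x hx y hy hxy
  simp only [Finset.coe_compl, Set.mem_compl_iff, Finset.mem_coe, Finset.mem_insert,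
    Finset.mem_singleton, not_or] at hx hy
  simp only [adj_iff, hxy, ne_eq, Sym2.eq_iff, not_false_eq_true, true_and]
  grind

theorem adj_one_or_adj_two {k : ℕ} (hk : 2 ≤ k) :
    ∀ x ∈ ({1, 2}ᶜ : Finset (Fin (k + 2))), (Kgraph k).Adj 1 x ∨ (Kgraph k).Adj 2 x := by
  intro x hx
  have h2 : ((2 : Fin (k + 2)) : ℕ) = 2 := Nat.mod_eq_of_lt (show 2 < k + 2 by omega)
  have h3 : ((3 : Fin (k + 2)) : ℕ) = 3 := Nat.mod_eq_of_lt (show 3 < k + 2 by omega)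
  simp only [Finset.mem_compl, Finset.mem_insert, Finset.mem_singleton, not_or] at hx
  simp only [adj_iff, ne_eq, Sym2.eq_iff, Fin.ext_iff, Fin.val_zero, Fin.val_one, h2, h3] at hx ⊢
  omega

end Kgraph

theorem stmt_11 (k : ℕ) (hk : 2 ≤ k) (C : (Kgraph k).Coloring (Fin k)) :
    C 1 ≠ C 2 :=
  C.ne_of_isClique_of_forall_adj_or_adj (Kgraph.isClique_compl_one_two k)
    (by rw [Fintype.card_fin, Kgraph.card_compl_one_two (by omega)])
    (Kgraph.adj_one_or_adj_two hk)
end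

section
/- Let K be the complete graph on k+2 vertices w_1,...,w_{k+2} minus edges {w_1,w_2}, {w_2,w_3}, {w_3,w_4}, with k ≥ 2. For any assignment of (possibly equal) colors from a palette of k colors to w_2 and w_3: if the colors are distinct, the assignment extends to a proper k-coloring of K; if the colors are equal, any k-coloring of K extending the assignment has at least one monochromatic edge, and there exists an extension with exactly one monochromatic edge. -/
namespace SimpleGraph

variable {V α : Type*} (G : SimpleGraph V)

def monochromaticEdgeSet (f : V → α) : Set (Sym2 V) :=
  {e ∈ G.edgeSet | ∃ u v, e = s(u, v) ∧ f u = f v}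

variable {G}

@[simp]
theorem mem_monochromaticEdgeSet {f : V → α} {u v : V} :
    s(u, v) ∈ G.monochromaticEdgeSet f ↔ G.Adj u v ∧ f u = f v := by
  simp only [monochromaticEdgeSet, Set.mem_ofPred_eq, mem_edgeSet, Sym2.eq_iff]
  constructor
  · rintro ⟨hadj, x, y, ⟨rfl, rfl⟩ | ⟨rfl, rfl⟩, hf⟩
    exacts [⟨hadj, hf⟩, ⟨hadj, hf.symm⟩]
  · rintro ⟨hadj, hf⟩
    exact ⟨hadj, u, v, Or.inl ⟨rfl, rfl⟩, hf⟩

theorem monochromaticEdgeSet_nonempty_iff {f : V → α} :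
    (G.monochromaticEdgeSet f).Nonempty ↔ ∃ u v, G.Adj u v ∧ f u = f v := by
  constructor
  · rintro ⟨e, he, u, v, rfl, hf⟩
    exact ⟨u, v, he, hf⟩
  · rintro ⟨u, v, hadj, hf⟩
    exact ⟨s(u, v), mem_monochromaticEdgeSet.2 ⟨hadj, hf⟩⟩

theorem monochromaticEdgeSet_comp {β : Type*} {σ : α → β} (hσ : Function.Injective σ)
    (f : V → α) : G.monochromaticEdgeSet (σ ∘ f) = G.monochromaticEdgeSet f := by
  simp only [monochromaticEdgeSet, Function.comp_apply, hσ.eq_iff]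

theorem exists_adj_apply_eq_of_card_lt [Fintype α] {f : V → α} {s : Finset V}
    (hs : Fintype.card α < s.card) {a b : V}
    (hnonadj : ∀ u ∈ s, ∀ v ∈ s, u ≠ v → ¬G.Adj u v → s(u, v) = s(a, b)) (hab : f a ≠ f b) :
    ∃ u v, G.Adj u v ∧ f u = f v := by
  obtain ⟨u, hu, v, hv, huv, hf⟩ :=
    Finset.exists_ne_map_eq_of_card_lt_of_maps_to (t := Finset.univ) hs (fun _ _ ↦ by simp)
  by_cases hadj : G.Adj u v
  · exact ⟨u, v, hadj, hf⟩
  · obtain ⟨rfl, rfl⟩ | ⟨rfl, rfl⟩ := Sym2.eq_iff.1 (hnonadj u hu v hv huv hadj)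
    exacts [absurd hf hab, absurd hf.symm hab]

theorem Coloring.exists_apply_eq_apply_eq (C : G.Coloring α) {a b : V} (hab : C a ≠ C b)
    {c d : α} (hcd : c ≠ d) : ∃ C' : G.Coloring α, C' a = c ∧ C' b = d := by
  obtain ⟨σ, hσa, hσb⟩ :=
    MulAction.is_two_pretransitive_iff.1 (Equiv.Perm.isMultiplyPretransitive α 2) hab hcd
  exact ⟨(Embedding.completeGraph σ.toEmbedding).toHom.comp C, hσa, hσb⟩

end SimpleGraph

open SimpleGraph

variable {k : ℕ}

theorem Fin.val_two_of_two_le (hk : 2 ≤ k) : ((2 : Fin (k + 2)) : ℕ) = 2 :=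
  Fin.val_cast_of_lt (n := k + 2) (a := 2) (by omega)

-- The complement of `Kgraph k` is the path `w₁ w₂ w₃ w₄` together with isolated vertices.
theorem kgraph_adj_iff (hk : 2 ≤ k) {u v : Fin (k + 2)} :
    (Kgraph k).Adj u v ↔
      (u : ℕ) ≠ v ∧ ¬((u : ℕ) + v ≤ 5 ∧ ((u : ℕ) = v + 1 ∨ (v : ℕ) = u + 1)) := by
  have h3 : ((3 : Fin (k + 2)) : ℕ) = 3 := Fin.val_cast_of_lt (n := k + 2) (a := 3) (by omega)
  simp only [Kgraph, deleteEdges_adj, completeGraph_eq_top, top_adj, Set.mem_insert_iff,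
    Set.mem_singleton_iff, Sym2.eq_iff, Fin.ext_iff, Fin.val_zero, Fin.val_one,
    Fin.val_two_of_two_le hk, h3]
  omega

-- Colour classes `{w₁, w₂}`, `{w₃, w₄}` and singletons.
def kgraphColoring (hk : 2 ≤ k) : (Kgraph k).Coloring (Fin k) :=
  Coloring.mk (fun i ↦ ⟨if (i : ℕ) ≤ 3 then i / 2 else i - 2, by split_ifs <;> omega⟩)
    fun {u v} huv ↦ by
      rw [kgraph_adj_iff hk] at huv
      simp only [ne_eq, Fin.mk.injEq]
      split_ifs <;> omega

theorem kgraphColoring_one_ne_two (hk : 2 ≤ k) : kgraphColoring hk 1 ≠ kgraphColoring hk 2 := by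
  simp [kgraphColoring, Coloring.mk, Fin.ext_iff, Nat.mod_eq_of_lt (show 2 < k + 2 by omega)]

-- Truncated subtraction merges `w₁, w₂, w₃` into one colour class, whose only edge is `w₁ w₃`.
def truncSubTwo (hk : 2 ≤ k) (i : Fin (k + 2)) : Fin k := ⟨i - 2, by omega⟩

theorem kgraph_monochromaticEdgeSet_truncSubTwo (hk : 2 ≤ k) :
    (Kgraph k).monochromaticEdgeSet (truncSubTwo hk) = {s(0, 2)} := by
  ext e
  induction e using Sym2.ind with
  | _ u v =>
    rw [mem_monochromaticEdgeSet, kgraph_adj_iff hk, Set.mem_singleton_iff, Sym2.eq_iff]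
    simp only [truncSubTwo, Fin.ext_iff, Fin.val_zero, Fin.val_two_of_two_le hk]
    omega

theorem kgraph_exists_adj_apply_eq {α : Type*} [Fintype α] (hk : 2 ≤ k)
    (hα : Fintype.card α ≤ k) {f : Fin (k + 2) → α} (hf : f 1 = f 2) :
    ∃ u v, (Kgraph k).Adj u v ∧ f u = f v := by
  have hadj : (Kgraph k).Adj 0 2 := by
    rw [kgraph_adj_iff hk, Fin.val_zero, Fin.val_two_of_two_le hk]
    omega
  by_cases h01 : f 0 = f 1
  · exact ⟨0, 2, hadj, h01.trans hf⟩
  refine exists_adj_apply_eq_of_card_lt (s := Finset.univ.erase 2) ?_ ?_ h01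
  · rw [Finset.card_erase_of_mem (Finset.mem_univ _), Finset.card_univ, Fintype.card_fin]
    omega
  · intro u hu v hv huv hnadj
    rw [Finset.mem_erase, ne_eq, Fin.ext_iff, Fin.val_two_of_two_le hk] at hu hv
    rw [kgraph_adj_iff hk] at hnadj
    simp only [Sym2.eq_iff, Fin.ext_iff, Fin.val_zero, Fin.val_one]
    omega

theorem stmt_12 (k : ℕ) (hk : 2 ≤ k) (c₂ c₃ : Fin k) :
    (c₂ ≠ c₃ → ∃ C : (Kgraph k).Coloring (Fin k), C 1 = c₂ ∧ C 2 = c₃) ∧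
      (c₂ = c₃ →
        (∀ f : Fin (k + 2) → Fin k, f 1 = c₂ → f 2 = c₃ →
          ∃ e ∈ (Kgraph k).edgeSet, ∃ u v, e = s(u, v) ∧ f u = f v) ∧
        (∃ f : Fin (k + 2) → Fin k, f 1 = c₂ ∧ f 2 = c₃ ∧
          {e ∈ (Kgraph k).edgeSet | ∃ u v, e = s(u, v) ∧ f u = f v}.ncard = 1)) := by
  refine ⟨(kgraphColoring hk).exists_apply_eq_apply_eq (kgraphColoring_one_ne_two hk),
    fun h₂₃ ↦ ⟨fun f hf₂ hf₃ ↦ ?_, ?_⟩⟩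
  · exact monochromaticEdgeSet_nonempty_iff.2 <|
      kgraph_exists_adj_apply_eq hk (Fintype.card_fin k).le (hf₂.trans (h₂₃.trans hf₃.symm))
  · subst h₂₃
    have h₁₂ : truncSubTwo hk 1 = truncSubTwo hk 2 := by
      simp only [truncSubTwo, Fin.val_one, Fin.val_two_of_two_le hk]
    refine ⟨Equiv.swap (truncSubTwo hk 1) c₂ ∘ truncSubTwo hk, Equiv.swap_apply_left _ _,
      by rw [Function.comp_apply, ← h₁₂, Equiv.swap_apply_left], ?_⟩
    change ((Kgraph k).monochromaticEdgeSet _).ncard = 1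
    rw [monochromaticEdgeSet_comp (Equiv.injective _), kgraph_monochromaticEdgeSet_truncSubTwo,
      Set.ncard_singleton]
end

section
/- Let G = (V,E) be a simple graph with at most n^2 edges (n = |V|), partitioned by a coloring into a black independent set I of size at least 2 and white vertices, inside the augmented graph G' (G plus a fully connected clique C of n^2 vertices all colored white). Then the optimal value of the MaxIS-derived bound satisfies: opt_{IS}(G)·n^2 ≤ (number of edges of G' covered by the best such coloring), where opt_{IS}(G) is the maximum size of an independent set in G. -/
/-!
Colour an independent set `I` of `G` black; it stays independent in `G'`. Every black vertex
is adjacent to all `n^2` clique vertices, and the edges `{a, c}` with `a ∈ I`, `c ∈ C` are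
pairwise distinct, so they alone give `|I| · n^2` covered edges.
-/

/-- The augmented graph `G'`: the graph `G` together with a clique `C` of `n^2`
new vertices, where every vertex of `C` is adjacent to every vertex of `G`. -/
def augGraph {V : Type*} (G : SimpleGraph V) (n : ℕ) : SimpleGraph (V ⊕ Fin (n ^ 2)) where
  Adj x y :=
    match x, y with
    | .inl a, .inl b => G.Adj a b
    | .inl _, .inr _ => True
    | .inr _, .inl _ => True
    | .inr a, .inr b => a ≠ b
  symm := by
    constructor
    rintro (a | a) (b | b) h <;> simp_all
    · exact h.symm
    · exact fun hh => h hh.symm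
  loopless := by
    constructor
    rintro (a | a) h <;> simp_all

namespace SimpleGraph

theorem ncard_mul_ncard_le_ncard_edges_meeting {W : Type*} [Finite W] (H : SimpleGraph W)
    {A B : Set W} (hAB : ∀ a ∈ A, ∀ b ∈ B, H.Adj a b) :
    A.ncard * B.ncard ≤ {e ∈ H.edgeSet | ∃ x ∈ e, x ∈ A}.ncard := by
  let f : W × W → Sym2 W := fun p => s(p.1, p.2)
  -- `s(a, b) = s(b', a')` would put `a = b'` in `A ∩ B`, and `H` has no loops.
  have hinj : Set.InjOn f (A ×ˢ B) := by
    rintro ⟨a, b⟩ ⟨ha, hb⟩ ⟨a', b'⟩ ⟨ha', hb'⟩ h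
    rcases Sym2.eq_iff.mp h with ⟨rfl, rfl⟩ | ⟨rfl, rfl⟩
    · rfl
    · exact (H.loopless.irrefl a (hAB a ha a hb')).elim
  have hsub : f '' (A ×ˢ B) ⊆ {e ∈ H.edgeSet | ∃ x ∈ e, x ∈ A} := by
    rintro _ ⟨⟨a, b⟩, ⟨ha, hb⟩, rfl⟩
    exact ⟨hAB a ha b hb, a, Sym2.mem_mk_left a b, ha⟩
  calc A.ncard * B.ncard = (f '' (A ×ˢ B)).ncard := by
        rw [hinj.ncard_image, Set.ncard_prod]
    _ ≤ _ := Set.ncard_le_ncard hsub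

end SimpleGraph

theorem not_augGraph_adj_of_mem_image_inl {V : Type*} {G : SimpleGraph V} {n : ℕ} {I : Set V}
    (hI : ∀ a ∈ I, ∀ b ∈ I, ¬ G.Adj a b) :
    ∀ a ∈ Sum.inl '' I, ∀ b ∈ Sum.inl '' I, ¬ (augGraph G n).Adj a b := by
  rintro _ ⟨a, ha, rfl⟩ _ ⟨b, hb, rfl⟩
  exact hI a ha b hb

theorem stmt_19_general {V : Type*} [Fintype V] (G : SimpleGraph V) (n : ℕ)
    (I : Set V) (hI : ∀ a ∈ I, ∀ b ∈ I, ¬ G.Adj a b) :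
    ∃ S : Set (V ⊕ Fin (n ^ 2)),
      (∀ a ∈ S, ∀ b ∈ S, ¬ (augGraph G n).Adj a b) ∧
        I.ncard * n ^ 2 ≤
          {e ∈ (augGraph G n).edgeSet | ∃ x ∈ e, x ∈ S}.ncard := by
  refine ⟨Sum.inl '' I, not_augGraph_adj_of_mem_image_inl hI, ?_⟩
  have hcover := (augGraph G n).ncard_mul_ncard_le_ncard_edges_meeting
    (A := Sum.inl '' I) (B := Set.range Sum.inr) (by rintro _ ⟨a, -, rfl⟩ _ ⟨c, rfl⟩; trivial)
  rwa [Set.ncard_image_of_injective _ Sum.inl_injective,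
    Set.ncard_range_of_injective Sum.inr_injective, Nat.card_eq_fintype_card,
    Fintype.card_fin] at hcover

theorem stmt_19 {V : Type*} [Fintype V] (G : SimpleGraph V) (n : ℕ)
    (hcard : Fintype.card V = n) (hE : G.edgeSet.ncard ≤ n ^ 2)
    (I : Set V) (hI : ∀ a ∈ I, ∀ b ∈ I, ¬ G.Adj a b)
    (hmaxI : ∀ J : Set V, (∀ a ∈ J, ∀ b ∈ J, ¬ G.Adj a b) → J.ncard ≤ I.ncard)
    (h2 : 2 ≤ I.ncard) :
    ∃ S : Set (V ⊕ Fin (n ^ 2)),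
      (∀ a ∈ S, ∀ b ∈ S, ¬ (augGraph G n).Adj a b) ∧
        I.ncard * n ^ 2 ≤
          {e ∈ (augGraph G n).edgeSet | ∃ x ∈ e, x ∈ S}.ncard :=
  stmt_19_general G n I hI
end
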